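/- arXiv:2506.17927 — 5 statements merged into one kernel-verified Lean document; each statement's English description precedes it below -/
import Mathlib

section
/- For every time-dependent transition kernel κ : ℕ → X → PMF X, every x ∈ X and every t ≤ H, the safe probability is unchanged by the absorbing modification: Ψ_κ(x, t) = Ψ_{κ̃}(x, t). -/
open scoped BigOperators

/-- Trajectory distribution of the time-dependent kernel `κ` started at state `x` at time `t`,
run for `n` further steps: a PMF on functions `Fin (n+1) → X` recording `X_t, ..., X_{t+n}`,
with `X_t = x` and `X_{s+1} ~ κ s (X_s)` sampled via iterated `PMF.bind`. -/
noncomputable def traj {X : Type*} (κ : ℕ → X → PMF X) : ℕ → (n : ℕ) → X → PMF (Fin (n + 1) → X)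
  | _, 0, x => PMF.pure fun _ => x
  | t, n + 1, x => (κ t x).bind fun x' => (traj κ (t + 1) n x').map (Fin.cons x)

/-- Safe probability `Ψ_κ(x, t)`: the probability, under the trajectory distribution of `κ`
started at `x` at time `t` over horizon `H`, that every state of the trajectory lies in the
safe set `C`. -/
noncomputable def safeProb {X : Type*} [Fintype X] [DecidableEq X]
    (C : Set X) [DecidablePred (· ∈ C)] (κ : ℕ → X → PMF X) (H t : ℕ) (x : X) : ℝ :=
  ∑ f : Fin (H - t + 1) → X,
    if ∀ i : Fin (H - t + 1), f i ∈ C then ((traj κ t (H - t) x) f).toReal else 0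

/-!
A trajectory that stays in `C` only ever samples its next state from a kernel evaluated at a
state of `C`, where `κ` and its absorbing modification agree. Inductively on the horizon: the
first transition from `x` contributes to the event only when `x ∈ C`, since `Fin.cons x g`
stays in `C` iff `x ∈ C` and `g` does.
-/

theorem Fin.cons_preimage_setOf_forall_mem {X : Type*} (C : Set X) (n : ℕ) (x : X) :
    Fin.cons x ⁻¹' {f : Fin (n + 2) → X | ∀ i, f i ∈ C}
      = {g | x ∈ C ∧ ∀ i, g i ∈ C} := by
  ext g
  simp [Fin.forall_fin_succ]

theorem traj_toOuterMeasure_forall_mem_congr {X : Type*} {C : Set X} {κ κ' : ℕ → X → PMF X}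
    (h : ∀ s, ∀ y ∈ C, κ s y = κ' s y) (n t : ℕ) (x : X) :
    (traj κ t n x).toOuterMeasure {f | ∀ i, f i ∈ C}
      = (traj κ' t n x).toOuterMeasure {f | ∀ i, f i ∈ C} := by
  induction n generalizing t x with
  | zero => rfl
  | succ n ih =>
    simp only [traj, PMF.toOuterMeasure_bind_apply, PMF.toOuterMeasure_map_apply,
      Fin.cons_preimage_setOf_forall_mem]
    by_cases hx : x ∈ C
    · simp only [hx, true_and, h t x hx, ih]
    · simp [hx]

theorem safeProb_eq_toReal_toOuterMeasure {X : Type*} [Fintype X] [DecidableEq X]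
    (C : Set X) [DecidablePred (· ∈ C)] (κ : ℕ → X → PMF X) (H t : ℕ) (x : X) :
    safeProb C κ H t x
      = ((traj κ t (H - t) x).toOuterMeasure {f | ∀ i, f i ∈ C}).toReal := by
  rw [PMF.toOuterMeasure_apply, tsum_fintype, ENNReal.toReal_sum fun f _ =>
    ne_top_of_le_ne_top (PMF.apply_ne_top _ f) (Set.indicator_le_self _ _ f)]
  simp only [safeProb, Set.indicator_apply, Set.mem_ofPred_eq, apply_ite ENNReal.toReal,
    ENNReal.toReal_zero]

theorem safeProb_congr {X : Type*} [Fintype X] [DecidableEq X]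
    (C : Set X) [DecidablePred (· ∈ C)] {κ κ' : ℕ → X → PMF X}
    (h : ∀ s, ∀ y ∈ C, κ s y = κ' s y) (H t : ℕ) (x : X) :
    safeProb C κ H t x = safeProb C κ' H t x := by
  rw [safeProb_eq_toReal_toOuterMeasure, safeProb_eq_toReal_toOuterMeasure,
    traj_toOuterMeasure_forall_mem_congr h]

theorem safeProb_absorbing_modification_general
    {X : Type*} [Fintype X] [DecidableEq X]
    (C : Set X) [DecidablePred (· ∈ C)] (H : ℕ)
    (κ : ℕ → X → PMF X) (x : X) (t : ℕ) :
    safeProb C κ H t x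
      = safeProb C (fun s y => if y ∈ C then κ s y else PMF.pure y) H t x :=
  safeProb_congr C (fun _ _ hy => (if_pos hy).symm) H t x

/-- **First step of Proposition 1.** The safe probability is unchanged when `κ` is replaced by
its absorbing modification (which behaves like `κ` on the safe set `C` and stays put outside). -/
theorem safeProb_absorbing_modification
    {X : Type*} [Fintype X] [Nonempty X] [DecidableEq X]
    (C : Set X) [DecidablePred (· ∈ C)] (H : ℕ)
    (κ : ℕ → X → PMF X) (x : X) (t : ℕ) (ht : t ≤ H) :
    safeProb C κ H t x
      = safeProb C (fun s y => if y ∈ C then κ s y else PMF.pure y) H t x :=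
  safeProb_absorbing_modification_general C H κ x t
end

section
/- Let σ : ℕ → X → PMF X be a time-dependent transition kernel that is absorbing outside the safe set, i.e. σ s x = PMF.pure x for every s : ℕ and every x ∉ C. Then for every x ∈ X and every t ≤ H, the probability under the trajectory distribution of σ started at x at time t that the terminal state X_H lies in C equals the probability that X_τ ∈ C for every τ with t ≤ τ ≤ H (i.e. it equals Ψ_σ(x, t)). -/
open scoped BigOperators

section Aux
variable {X : Type*} (C : Set X) (σ : ℕ → X → PMF X)
  (habs : ∀ s : ℕ, ∀ x : X, x ∉ C → σ s x = PMF.pure x)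

lemma traj_const_of_not_mem (habs : ∀ s : ℕ, ∀ x : X, x ∉ C → σ s x = PMF.pure x) :
    ∀ (n t : ℕ) (x : X) (f : Fin (n+1) → X), f ∈ (traj σ t n x).support → x ∉ C →
      ∀ i, f i = x := by
  intro n
  induction n with
  | zero =>
    intro t x f hf _ i
    simp [traj, PMF.support_pure] at hf
    simp [hf]
  | succ n ih =>
    intro t x f hf hx i
    rw [traj, habs t x hx, PMF.pure_bind, PMF.support_map] at hf
    obtain ⟨g, hg, rfl⟩ := hf
    refine Fin.cases rfl (fun j => ?_) i
    simp only [Fin.cons_succ]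
    exact ih (t+1) x g hg hx j

lemma traj_safe_of_last (habs : ∀ s : ℕ, ∀ x : X, x ∉ C → σ s x = PMF.pure x) :
    ∀ (n t : ℕ) (x : X) (f : Fin (n+1) → X), f ∈ (traj σ t n x).support →
      f (Fin.last n) ∈ C → ∀ i, f i ∈ C := by
  intro n
  induction n with
  | zero =>
    intro t x f hf hlast i
    simp [traj, PMF.support_pure] at hf
    subst hf
    exact hlast
  | succ n ih =>
    intro t x f hf hlast i
    by_cases hx : x ∈ C
    · rw [traj] at hf
      simp only [PMF.support_bind, PMF.support_map, Set.mem_iUnion, Set.mem_image] at hf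
      obtain ⟨x', _, g, hg, rfl⟩ := hf
      have hgl : g (Fin.last n) ∈ C := by
        rw [show (Fin.last (n+1)) = Fin.succ (Fin.last n) from rfl, Fin.cons_succ] at hlast
        exact hlast
      refine Fin.cases hx (fun j => ?_) i
      simpa using ih (t+1) x' g hg hgl j
    · exact absurd (by rw [traj_const_of_not_mem C σ habs (n+1) t x f hf hx] at hlast; exact hlast) hx

end Aux

/-- **Second step of Proposition 1.** For a kernel `σ` that is absorbing outside the safe set
`C`, the probability that the terminal state `X_H` is safe equals the probability that the whole
trajectory is safe, i.e. equals `Ψ_σ(x, t)`. -/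
theorem terminal_safe_eq_safeProb_of_absorbing
    {X : Type*} [Fintype X] [Nonempty X] [DecidableEq X]
    (C : Set X) [DecidablePred (· ∈ C)] (H : ℕ)
    (σ : ℕ → X → PMF X) (habs : ∀ s : ℕ, ∀ x : X, x ∉ C → σ s x = PMF.pure x)
    (x : X) (t : ℕ) (ht : t ≤ H) :
    (∑ f : Fin (H - t + 1) → X,
        if f (Fin.last (H - t)) ∈ C then ((traj σ t (H - t) x) f).toReal else 0)
      = safeProb C σ H t x := by
  unfold safeProb
  refine Finset.sum_congr rfl fun f _ => ?_
  by_cases h0 : (traj σ t (H - t) x) f = 0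
  · simp [h0]
  · have hf : f ∈ (traj σ t (H - t) x).support := by rwa [PMF.mem_support_iff]
    have : (f (Fin.last (H - t)) ∈ C) ↔ (∀ i, f i ∈ C) :=
      ⟨fun h => traj_safe_of_last C σ habs (H - t) t x f hf h, fun h => h _⟩
    simp only [this]
end

section
/- (Proposition 1, finite-state form.) For every time-dependent transition kernel κ : ℕ → X → PMF X, every x ∈ X and every t ≤ H, the safe probability Ψ_κ(x, t) equals the probability, under the trajectory distribution of the absorbing modification κ̃ started at x at time t, that the terminal state X_H lies in C. Equivalently, the expected total reward of the time-augmented absorbing chain with reward r = 1{remaining time = 0} · 1{state ∈ C}, started at x with remaining time k = H - t, equals the long-term safe probability Ψ_κ(x, H - k). -/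
open scoped BigOperators

/-! Induction on the number of steps, conditioning on the first transition. From a safe state
both chains move alike and the safe event and the terminal event each reduce to the same event
for the remaining steps. From an unsafe state the safe event is already impossible, while the
absorbing chain stays frozen there, so its terminal state is unsafe as well. -/

theorem PMF.sum_ite_toReal_eq_toOuterMeasure {α : Type*} [Fintype α] (p : PMF α)
    (P : α → Prop) [DecidablePred P] :
    ∑ a, (if P a then (p a).toReal else 0) = (p.toOuterMeasure {a | P a}).toReal := by
  rw [p.toOuterMeasure_apply_fintype, ENNReal.toReal_sum fun a _ => ?_]
  · refine Finset.sum_congr rfl fun a _ => ?_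
    by_cases h : P a <;> simp [Set.indicator, h]
  · exact (Set.indicator_le_self _ _ a).trans_lt (p.apply_lt_top a) |>.ne

section traj

variable {X : Type*} (κ : ℕ → X → PMF X)

theorem toOuterMeasure_traj_succ (t n : ℕ) (x : X) (s : Set (Fin (n + 2) → X)) :
    (traj κ t (n + 1) x).toOuterMeasure s
      = ∑' x', κ t x x' * (traj κ (t + 1) n x').toOuterMeasure
          (Fin.cons (α := fun _ => X) x ⁻¹' s) := by
  simp only [traj, PMF.toOuterMeasure_bind_apply, PMF.toOuterMeasure_map_apply]

noncomputable def absorbing (C : Set X) [DecidablePred (· ∈ C)] (s : ℕ) (y : X) : PMF X :=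
  if y ∈ C then κ s y else PMF.pure y

variable {κ} {C : Set X} [DecidablePred (· ∈ C)]

theorem traj_absorbing_of_notMem {x : X} (hx : x ∉ C) (t n : ℕ) :
    traj (absorbing κ C) t n x = PMF.pure fun _ => x := by
  induction n generalizing t with
  | zero => rfl
  | succ n ih =>
    simp only [traj, absorbing, if_neg hx, PMF.pure_bind, ih, PMF.pure_map]
    congr 1
    funext i
    exact Fin.cases rfl (fun _ => rfl) i

theorem toOuterMeasure_traj_forall_mem_eq_absorbing_last_mem (n t : ℕ) (x : X) :
    (traj κ t n x).toOuterMeasure {f | ∀ i, f i ∈ C}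
      = (traj (absorbing κ C) t n x).toOuterMeasure {f | f (Fin.last n) ∈ C} := by
  induction n generalizing t x with
  | zero => simp [traj, PMF.toOuterMeasure_pure_apply]
  | succ n ih =>
    rw [toOuterMeasure_traj_succ, toOuterMeasure_traj_succ]
    simp only [Set.preimage_ofPred_eq, Fin.forall_fin_succ (n := n + 1), Fin.cons_zero,
      Fin.cons_succ, ← Fin.succ_last]
    by_cases hx : x ∈ C
    · simp only [hx, true_and, ih, absorbing, if_pos]
    · simp [hx, absorbing, traj_absorbing_of_notMem hx, PMF.toOuterMeasure_pure_apply]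

end traj

theorem safeProb_eq_terminal_absorbing_general
    {X : Type*} [Fintype X] [DecidableEq X]
    (C : Set X) [DecidablePred (· ∈ C)] (H : ℕ)
    (κ : ℕ → X → PMF X) (x : X) (t : ℕ) :
    safeProb C κ H t x
      = ∑ f : Fin (H - t + 1) → X,
          if f (Fin.last (H - t)) ∈ C then
            ((traj (fun s y => if y ∈ C then κ s y else PMF.pure y) t (H - t) x) f).toReal
          else 0 := by
  rw [safeProb, PMF.sum_ite_toReal_eq_toOuterMeasure, PMF.sum_ite_toReal_eq_toOuterMeasure,
    toOuterMeasure_traj_forall_mem_eq_absorbing_last_mem]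
  rfl

/-- **Proposition 1 (finite-state form).** The long-term safe probability `Ψ_κ(x, t)` equals the
probability, under the trajectory distribution of the absorbing modification `κ̃` of `κ`
(`κ̃ s y = κ s y` for `y ∈ C`, `κ̃ s y = PMF.pure y` otherwise) started at `x` at time `t`, that
the terminal state `X_H` lies in `C` — i.e. the expected terminal reward `1{X_H ∈ C}` of the
auxiliary absorbing chain equals the long-term safe probability of the original chain. -/
theorem safeProb_eq_terminal_absorbing
    {X : Type*} [Fintype X] [Nonempty X] [DecidableEq X]
    (C : Set X) [DecidablePred (· ∈ C)] (H : ℕ)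
    (κ : ℕ → X → PMF X) (x : X) (t : ℕ) (ht : t ≤ H) :
    safeProb C κ H t x
      = ∑ f : Fin (H - t + 1) → X,
          if f (Fin.last (H - t)) ∈ C then
            ((traj (fun s y => if y ∈ C then κ s y else PMF.pure y) t (H - t) x) f).toReal
          else 0 :=
  safeProb_eq_terminal_absorbing_general C H κ x t
end

section
/- Let X, U, W be finite nonempty types, ν : X → PMF W a latent-variable distribution given the observed state, T : X → U → W → PMF X a transition kernel given state, action and latent variable, p : ℕ → X → PMF U a policy depending only on the observed state, x₀ : X, and t : ℕ. Consider the joint PMF over histories (X_0, U_0, X_1, U_1, ..., X_t, U_t, X_{t+1}) defined by X_0 = x₀ and, for each step s ≤ t, sampling U_s ~ p s (X_s) and then X_{s+1} ~ (ν X_s).bind (fun w => T X_s U_s w). Then for every history (x_0, u_0, ..., x_t, u_t) having positive probability and every x' : X, the conditional probability that X_{t+1} = x' given the entire history (X_0, U_0, ..., X_t, U_t) equals ∑_{w} ((ν x_t) w).toReal · ((T x_t u_t w) x').toReal; in particular, it depends only on (x_t, u_t). -/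
open scoped BigOperators

/-- Joint probability of a full history `(X_0, U_0, ..., X_t, U_t, X_{t+1})` of the confounded
process: `X_0 = x₀` and, at each step `s ≤ t`, the action is sampled as `U_s ~ p s (X_s)` and
the next state as `X_{s+1} ~ (ν X_s).bind (fun w => T X_s U_s w)` (the latent variable `W_s` is
drawn from `ν X_s` and marginalized out). Here `xs : Fin (t+2) → X` records `X_0, ..., X_{t+1}`
and `us : Fin (t+1) → U` records `U_0, ..., U_t`. -/
lemma pmf_sum_toReal {X : Type*} [Fintype X] (p : PMF X) : ∑ x, (p x).toReal = 1 := by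
  have h := p.tsum_coe
  rw [tsum_fintype] at h
  rw [← ENNReal.toReal_one, ← h, ENNReal.toReal_sum]
  intro a _; exact p.apply_ne_top a

noncomputable def histProb {X U W : Type*} [Fintype W] [DecidableEq X]
    (ν : X → PMF W) (T : X → U → W → PMF X) (p : ℕ → X → PMF U) (x₀ : X) (t : ℕ)
    (xs : Fin (t + 2) → X) (us : Fin (t + 1) → U) : ℝ :=
  (if xs 0 = x₀ then (1 : ℝ) else 0) *
    ∏ s : Fin (t + 1),
      (((p (s : ℕ) (xs s.castSucc)) (us s)).toReal *
        ∑ w : W, ((ν (xs s.castSucc)) w).toReal * ((T (xs s.castSucc) (us s) w) (xs s.succ)).toReal)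

/-- **Markov property of the observable process (equation (2) of the paper).** For every
conditioning history `(x_0, u_0, ..., x_t, u_t)` of positive probability and every `x' : X`,
the conditional probability that `X_{t+1} = x'` given the entire observed history equals
`∑ w, ν(w | x_t) · T(x' | x_t, u_t, w)`; in particular it depends only on `(x_t, u_t)`. -/
theorem observable_process_markov_property
    {X U W : Type*} [Fintype X] [Nonempty X] [Fintype U] [Nonempty U]
    [Fintype W] [Nonempty W] [DecidableEq X]
    (ν : X → PMF W) (T : X → U → W → PMF X) (p : ℕ → X → PMF U) (x₀ : X) (t : ℕ) :
    ∀ (xs : Fin (t + 1) → X) (us : Fin (t + 1) → U),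
      0 < ∑ x' : X, histProb ν T p x₀ t (Fin.snoc xs x') us →
      ∀ x' : X,
        histProb ν T p x₀ t (Fin.snoc xs x') us
            / (∑ x'' : X, histProb ν T p x₀ t (Fin.snoc xs x'') us)
          = ∑ w : W, ((ν (xs (Fin.last t))) w).toReal
              * ((T (xs (Fin.last t)) (us (Fin.last t)) w) x').toReal := by
  intro xs us hpos x'
  set g : X → ℝ := fun y => ∑ w : W, ((ν (xs (Fin.last t))) w).toReal
      * ((T (xs (Fin.last t)) (us (Fin.last t)) w) y).toReal with hg
  set A : ℝ := (if xs 0 = x₀ then (1 : ℝ) else 0) *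
    ((∏ i : Fin t,
        (((p (i : ℕ) (xs i.castSucc)) (us i.castSucc)).toReal *
          ∑ w : W, ((ν (xs i.castSucc)) w).toReal *
            ((T (xs i.castSucc) (us i.castSucc) w) (xs i.succ)).toReal)) *
      ((p t (xs (Fin.last t))) (us (Fin.last t))).toReal) with hA
  have key : ∀ y : X, histProb ν T p x₀ t (Fin.snoc xs y) us = A * g y := by
    intro y
    unfold histProb
    rw [Fin.prod_univ_castSucc]
    have h0 : (Fin.snoc xs y : Fin (t+2) → X) 0 = xs 0 := by
      show (Fin.snoc xs y : Fin (t+2) → X) (Fin.castSucc 0) = xs 0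
      rw [Fin.snoc_castSucc]
    rw [h0]
    have hterm : ∀ i : Fin t,
        (Fin.snoc xs y : Fin (t+2) → X) (i.castSucc).castSucc = xs i.castSucc ∧
        (Fin.snoc xs y : Fin (t+2) → X) (i.castSucc).succ = xs i.succ := by
      intro i
      constructor
      · rw [Fin.snoc_castSucc]
      · rw [Fin.succ_castSucc, Fin.snoc_castSucc]
    have hlast1 : (Fin.snoc xs y : Fin (t+2) → X) (Fin.last t).castSucc = xs (Fin.last t) := by
      rw [Fin.snoc_castSucc]
    have hlast2 : (Fin.snoc xs y : Fin (t+2) → X) (Fin.last t).succ = y := by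
      rw [Fin.succ_last, Fin.snoc_last]
    rw [hlast1, hlast2]
    have hprod : (∏ i : Fin t,
        (((p ((i.castSucc : Fin (t+1)) : ℕ) ((Fin.snoc xs y : Fin (t+2) → X) (i.castSucc).castSucc)) (us i.castSucc)).toReal *
          ∑ w : W, ((ν ((Fin.snoc xs y : Fin (t+2) → X) (i.castSucc).castSucc)) w).toReal *
            ((T ((Fin.snoc xs y : Fin (t+2) → X) (i.castSucc).castSucc) (us i.castSucc) w) ((Fin.snoc xs y : Fin (t+2) → X) (i.castSucc).succ)).toReal))
      = ∏ i : Fin t,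
        (((p (i : ℕ) (xs i.castSucc)) (us i.castSucc)).toReal *
          ∑ w : W, ((ν (xs i.castSucc)) w).toReal *
            ((T (xs i.castSucc) (us i.castSucc) w) (xs i.succ)).toReal) := by
      apply Finset.prod_congr rfl
      intro i _
      rw [(hterm i).1, (hterm i).2, Fin.coe_castSucc]
    rw [hprod, hA, hg]
    simp only [Fin.val_last]
    ring
  have hsumg : ∑ y : X, g y = 1 := by
    rw [hg]
    rw [Finset.sum_comm]
    have : ∀ w : W, ∑ y : X, ((ν (xs (Fin.last t))) w).toReal
        * ((T (xs (Fin.last t)) (us (Fin.last t)) w) y).toReal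
        = ((ν (xs (Fin.last t))) w).toReal := by
      intro w
      rw [← Finset.mul_sum, pmf_sum_toReal, mul_one]
    simp only [this]
    exact pmf_sum_toReal _
  have hden : ∑ x'' : X, histProb ν T p x₀ t (Fin.snoc xs x'') us = A := by
    simp only [key, ← Finset.mul_sum, hsumg, mul_one]
  have hApos : A ≠ 0 := by
    rw [hden] at hpos; exact ne_of_gt hpos
  rw [key, hden, mul_comm, mul_div_assoc, div_self hApos, mul_one]
end

section
/- Let Y, U, M be finite nonempty types and let r : Y → ℝ, V : Y → ℝ, π : Y → U → ℝ, Pon : Y → U → Y → ℝ, PoffY : Y → U → M → Y → ℝ, PoffU : Y → U → ℝ, PoffM : Y → U → M → ℝ, and Q_M : Y → U → M → ℝ. Assume: (i) the Bellman equation V y = ∑_{u} π y u · (∑_{y'} (V y' + r y) · Pon y u y') for all y; (ii) the front-door adjustment identity Pon y u y' = ∑_{m} ∑_{u'} PoffY y u' m y' · PoffU y u' · PoffM y u m for all y, u, y'; (iii) Q_M y u m = ∑_{y'} (V y' + r y) · PoffY y u m y' for all y, u, m. Then for every y, V y = ∑_{m} ∑_{u'} ∑_{u} Q_M y u' m ·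 PoffU y u' · PoffM y u m · π y u. -/
open scoped BigOperators


private lemma sum_swap4 {A B C D : Type*} [Fintype A] [Fintype B] [Fintype C] [Fintype D]
    (f : A → B → C → D → ℝ) :
    ∑ a : A, ∑ b : B, ∑ c : C, ∑ d : D, f a b c d
      = ∑ c : C, ∑ d : D, ∑ a : A, ∑ b : B, f a b c d := by
  have h1 : ∀ a : A, ∑ b : B, ∑ c : C, ∑ d : D, f a b c d
      = ∑ c : C, ∑ d : D, ∑ b : B, f a b c d := fun a => by
    rw [Finset.sum_comm]
    exact Finset.sum_congr rfl fun c _ => Finset.sum_comm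
  simp only [h1]
  rw [Finset.sum_comm]
  exact Finset.sum_congr rfl fun c _ => Finset.sum_comm

/-- **Value-function decomposition via front-door adjustment (Section 3.4).** If the value
function satisfies the Bellman equation with the online kernel `Pon`, the online kernel is
given by the front-door adjustment through the offline statistics `PoffY, PoffU, PoffM`, and
the mediator-conditioned Q-function `Q_M` satisfies its offline Bellman equation, then the
value function is expressible purely through `Q_M`, the offline statistics, and the policy. -/
theorem value_function_frontdoor_decomposition
    {Y U M : Type*} [Fintype Y] [Nonempty Y] [Fintype U] [Nonempty U] [Fintype M] [Nonempty M]
    (r : Y → ℝ) (V : Y → ℝ) (π : Y → U → ℝ)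
    (Pon : Y → U → Y → ℝ) (PoffY : Y → U → M → Y → ℝ)
    (PoffU : Y → U → ℝ) (PoffM : Y → U → M → ℝ) (Q_M : Y → U → M → ℝ)
    (hBellman : ∀ y : Y, V y = ∑ u : U, π y u * ∑ y' : Y, (V y' + r y) * Pon y u y')
    (hFrontdoor : ∀ (y : Y) (u : U) (y' : Y),
      Pon y u y' = ∑ m : M, ∑ u' : U, PoffY y u' m y' * PoffU y u' * PoffM y u m)
    (hQM : ∀ (y : Y) (u : U) (m : M),
      Q_M y u m = ∑ y' : Y, (V y' + r y) * PoffY y u m y') :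
    ∀ y : Y, V y = ∑ m : M, ∑ u' : U, ∑ u : U,
      Q_M y u' m * PoffU y u' * PoffM y u m * π y u := by
  intro y
  rw [hBellman y]
  simp only [hFrontdoor, hQM, Finset.mul_sum, Finset.sum_mul]
  rw [sum_swap4 (f := fun (u : U) (y' : Y) (m : M) (u' : U) =>
    π y u * ((V y' + r y) * (PoffY y u' m y' * PoffU y u' * PoffM y u m)))]
  refine Finset.sum_congr rfl fun m _ => Finset.sum_congr rfl fun u' _ =>
    Finset.sum_congr rfl fun u _ => Finset.sum_congr rfl fun y' _ => by ring
end
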